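/- arXiv:math-ph/0012024 — 2 statements merged into one kernel-verified Lean document; each statement's English description precedes it below -/
import Mathlib

section
/- Fix a mass m > 0 and an order l ∈ ℕ. For every v ∈ K^l_m with v ≠ 0 (as an element of L²(ℝ³, ℂ)) there exists w ∈ K^l_m such that Im⟨v, w⟩ ≠ 0, where ⟨·,·⟩ is the L² inner product. In other words, the antisymmetric real bilinear form (v,w) ↦ Im⟨v,w⟩ is nondegenerate on K^l_m, so K^l_m is a symplectic subspace. (This is the statement that the test-distribution space 𝒫^l(γ_i) of an inertial observer is a symplectic subspace of the one-particle phase space of the free scalar field.) -/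
open MeasureTheory

noncomputable section

/-- `λ_m(ξ) = √(|ξ|² + m²)` on ℝ³. -/
def lamm (m : ℝ) (ξ : EuclideanSpace ℝ (Fin 3)) : ℝ :=
  Real.sqrt (∑ i, ξ i ^ 2 + m ^ 2)

/-- The multi-indices `α ∈ ℕ³` with `|α| ≤ l`, as a finite set. -/
def multiIdx (l : ℕ) : Finset (Fin 3 → ℕ) :=
  (Fintype.piFinset fun _ => Finset.range (l + 1)).filter fun α => (∑ i, α i) ≤ l

/-- The function `ξ ↦ Σ_{|α| ≤ l} (−i)^{|α|} â_α(λ_m(ξ)) ξ^α λ_m(ξ)^{−1/2}` determined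
by a family of coefficient functions `a_α : ℝ → ℝ`. -/
def KElem (m : ℝ) (l : ℕ) (a : (Fin 3 → ℕ) → ℝ → ℝ) (ξ : EuclideanSpace ℝ (Fin 3)) : ℂ :=
  ∑ α ∈ multiIdx l,
    (-Complex.I) ^ (∑ i, α i) *
      VectorFourier.fourierIntegral Real.fourierChar volume (innerₗ ℝ) (fun t => (a α t : ℂ)) (lamm m ξ) *
      (∏ i, (ξ i : ℂ) ^ α i) *
      ((1 / Real.sqrt (lamm m ξ) : ℝ) : ℂ)

/-- The real-linear subspace `K^l_m ⊆ L²(ℝ³, ℂ)`: a.e.-classes of the functions `KElem m l a`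
where each `a_α` is smooth, compactly supported and real-valued. -/
def Kset (m : ℝ) (l : ℕ) : Set (Lp ℂ 2 (volume : Measure (EuclideanSpace ℝ (Fin 3)))) :=
  { v | ∃ a : (Fin 3 → ℕ) → ℝ → ℝ,
      (∀ α, ContDiff ℝ (⊤ : ℕ∞) (a α)) ∧ (∀ α, HasCompactSupport (a α)) ∧
      (v : EuclideanSpace ℝ (Fin 3) → ℂ) =ᵐ[volume] KElem m l a }

/-!
Translating the coefficients `a_α` by `s` multiplies `â_α(λ)` by the phase `e^{2πisλ}`, so together
with `v` every `e^{itλ} v` lies in `K^l_m`, and `⟨v, e^{itλ} v⟩ = ∫ e^{itλ} |v|²` is the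
characteristic function at `t` of the finite measure `ρ = λ_*(|v|² dξ)`. If all these inner
products were real, `ρ` and its reflection would have the same characteristic function, so `ρ`
would be symmetric; since `ρ` lives on `[m, ∞)`, it would vanish, and so would `v`.
-/
open Complex

namespace MeasureTheory

namespace Measure

lemma map_neg_eq_self_of_forall_charFun_im_eq_zero {μ : Measure ℝ} [IsFiniteMeasure μ]
    (h : ∀ t, (charFun μ t).im = 0) : μ.map Neg.neg = μ := by
  refine ext_of_charFun (funext fun t => ?_)
  rw [show (Neg.neg : ℝ → ℝ) = ((-1 : ℝ) * ·) by ext; simp, charFun_map_mul, neg_one_mul,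
    charFun_neg, conj_eq_iff_im.mpr (h t)]

lemma eq_zero_of_map_neg_eq_self {μ : Measure ℝ} (hsymm : μ.map Neg.neg = μ)
    (hnonpos : μ (Set.Iic 0) = 0) : μ = 0 := by
  have hnonneg : μ (Set.Ici 0) = 0 := by
    rw [← hsymm, map_apply measurable_neg measurableSet_Ici, Set.neg_preimage, Set.neg_Ici,
      neg_zero, hnonpos]
  rw [← measure_univ_eq_zero, ← Set.Iic_union_Ici (a := (0 : ℝ))]
  exact measure_union_null hnonpos hnonneg

end Measure

variable {X : Type*} [MeasurableSpace X] {μ : Measure X}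

lemma MemLp.exp_mul_I_mul {p : ENNReal} {f : X → ℂ} (hf : MemLp f p μ) {φ : X → ℝ}
    (hφ : AEMeasurable φ μ) : MemLp (fun x => cexp (φ x * I) * f x) p μ :=
  have hphase : AEStronglyMeasurable (fun x => cexp (φ x * I)) μ :=
    (by fun_prop : Continuous fun z : ℝ => cexp (z * I)).comp_aestronglyMeasurable
      hφ.aestronglyMeasurable
  hf.of_le (hphase.mul hf.1) (.of_forall fun x => by simp [norm_exp_ofReal_mul_I])

instance Lp.isFiniteMeasure_withDensity_sq_norm (f : Lp ℂ 2 μ) :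
    IsFiniteMeasure (μ.withDensity fun x => ENNReal.ofReal (‖f x‖ ^ 2)) :=
  isFiniteMeasure_withDensity_ofReal
    ((memLp_two_iff_integrable_sq_norm (Lp.aestronglyMeasurable f)).mp (Lp.memLp f)).2

lemma Lp.eq_zero_of_withDensity_sq_norm_eq_zero (f : Lp ℂ 2 μ)
    (h : μ.withDensity (fun x => ENNReal.ofReal (‖f x‖ ^ 2)) = 0) : f = 0 := by
  rw [withDensity_eq_zero_iff (by fun_prop)] at h
  rw [Lp.eq_zero_iff_ae_eq_zero]
  filter_upwards [h] with x hx
  simpa using hx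

lemma L2.inner_eq_charFun_map_withDensity (f g : Lp ℂ 2 μ) {φ : X → ℝ}
    (hφ : Measurable φ) (t : ℝ) (hg : g =ᵐ[μ] fun x => cexp (t * φ x * I) * f x) :
    inner ℂ f g = charFun ((μ.withDensity fun x => ENNReal.ofReal (‖f x‖ ^ 2)).map φ) t := by
  rw [charFun_apply_real, integral_map hφ.aemeasurable (by fun_prop),
    integral_withDensity_eq_integral_toReal_smul (by fun_prop)
      (.of_forall fun _ => ENNReal.ofReal_lt_top), L2.inner_def]
  refine integral_congr_ae (hg.mono fun x hx => ?_)
  dsimp only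
  rw [RCLike.inner_apply, hx, ENNReal.toReal_ofReal (sq_nonneg _), Complex.real_smul,
    Complex.ofReal_pow, ← Complex.mul_conj']
  ring

end MeasureTheory

lemma continuous_lamm (m : ℝ) : Continuous (lamm m) := by
  unfold lamm
  fun_prop

lemma lamm_pos {m : ℝ} (hm : 0 < m) (ξ : EuclideanSpace ℝ (Fin 3)) : 0 < lamm m ξ :=
  Real.sqrt_pos.mpr (by positivity)

lemma KElem_comp_add_right (m : ℝ) (l : ℕ) (a : (Fin 3 → ℕ) → ℝ → ℝ) (t : ℝ)
    (ξ : EuclideanSpace ℝ (Fin 3)) :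
    KElem m l (fun α x => a α (x + t / (2 * Real.pi))) ξ
      = cexp (t * lamm m ξ * I) * KElem m l a ξ := by
  rw [KElem, KElem, Finset.mul_sum]
  refine Finset.sum_congr rfl fun α _ => ?_
  have htranslate := VectorFourier.fourierIntegral_comp_add_right Real.fourierChar volume
    (innerₗ ℝ) (fun x => (a α x : ℂ)) (t / (2 * Real.pi))
  rw [Function.comp_def] at htranslate
  rw [htranslate]
  simp only [Circle.smul_def, Real.fourierChar_apply, innerₗ_apply_apply]
  have hphase : 2 * Real.pi * inner ℝ (t / (2 * Real.pi)) (lamm m ξ) = t * lamm m ξ := by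
    rw [RCLike.inner_apply, conj_trivial]
    field_simp
  rw [hphase, smul_eq_mul, ofReal_mul]
  ring

lemma exp_mul_mem_Kset {m : ℝ} {l : ℕ}
    {v : Lp ℂ 2 (volume : Measure (EuclideanSpace ℝ (Fin 3)))} (hv : v ∈ Kset m l) (t : ℝ) :
    ∃ w ∈ Kset m l, w =ᵐ[volume] fun ξ => cexp (t * lamm m ξ * I) * v ξ := by
  obtain ⟨a, ha, hac, hva⟩ := hv
  have hmem := (Lp.memLp v).exp_mul_I_mul (φ := fun ξ => t * lamm m ξ)
    ((continuous_const.mul (continuous_lamm m)).aemeasurable)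
  push_cast at hmem
  refine ⟨hmem.toLp _, ⟨fun α x => a α (x + t / (2 * Real.pi)),
    fun α => (ha α).comp (contDiff_id.add contDiff_const),
    fun α => (hac α).comp_homeomorph (Homeomorph.addRight _), ?_⟩, hmem.coeFn_toLp⟩
  filter_upwards [hmem.coeFn_toLp, hva] with ξ h1 h2
  rw [h1, h2, KElem_comp_add_right]

/-- For every nonzero `v ∈ K^l_m` there is `w ∈ K^l_m` with `Im⟨v, w⟩ ≠ 0`;
i.e. the symplectic form `(v,w) ↦ Im⟨v,w⟩` is nondegenerate on `K^l_m`. -/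
theorem Kset_symplectic (m : ℝ) (hm : 0 < m) (l : ℕ) :
    ∀ v ∈ Kset m l, v ≠ 0 →
      ∃ w ∈ Kset m l, (@inner ℂ _ _ v w).im ≠ 0 := by
  intro v hv hv0
  by_contra! hdegenerate
  set ρ := (volume.withDensity fun ξ => ENNReal.ofReal (‖v ξ‖ ^ 2)).map (lamm m)
  have hreal : ∀ t, (charFun ρ t).im = 0 := fun t => by
    obtain ⟨w, hwK, hw⟩ := exp_mul_mem_Kset hv t
    rw [← L2.inner_eq_charFun_map_withDensity v w (continuous_lamm m).measurable t hw]
    exact hdegenerate w hwK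
  have hpos : ρ (Set.Iic 0) = 0 := by
    have hempty : lamm m ⁻¹' Set.Iic 0 = ∅ :=
      Set.eq_empty_of_forall_notMem fun ξ hξ => (lamm_pos hm ξ).not_ge hξ
    rw [Measure.map_apply (continuous_lamm m).measurable measurableSet_Iic, hempty, measure_empty]
  have hρ : ρ = 0 := Measure.eq_zero_of_map_neg_eq_self
    (Measure.map_neg_eq_self_of_forall_charFun_im_eq_zero hreal) hpos
  rw [Measure.map_eq_zero_iff (continuous_lamm m).aemeasurable] at hρ
  exact hv0 (Lp.eq_zero_of_withDensity_sq_norm_eq_zero v hρ)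

end
end

section
/- Let m > 0. For every real-valued Schwartz function f on ℝ there exists a real-valued Schwartz function h on ℝ such that ĥ(λ) = i·f̂(λ) for every real λ with λ > m, where ˆ denotes the Fourier transform. (Consequently the space Z̃_j = { λ ↦ (λ²−m²)^{(2j+1)/4} f̂(λ) on (m,∞) : f real-valued Schwartz } is a complex-linear subspace even though only real-valued f occur.) -/
/-!
Multiply `f̂` by the symbol `σ(λ) = i·φ(λ)`, where `φ` is a smooth odd function equal to `1` on
`[m, ∞)` and constant outside `[-m, m]`, so that `σ` has temperate growth and the Fourier
multiplier `h = 𝓕⁻¹(σ f̂)` is a Schwartz function with `ĥ = i f̂` on `(m, ∞)`. Both `σ` and `f̂`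
(as `f` is real) satisfy `conj g(λ) = g(-λ)`, hence so does `σ f̂`, and the inverse Fourier
transform of such a function is real-valued.
-/

open Complex FourierTransform SchwartzMap ComplexConjugate
open scoped ContDiff

noncomputable section

namespace Function.HasTemperateGrowth

variable {E F : Type*} [NormedAddCommGroup E] [NormedSpace ℝ E] [NormedAddCommGroup F]
  [NormedSpace ℝ F]

lemma of_bounded_of_hasCompactSupport_fderiv {f : E → F} (hf : ContDiff ℝ ∞ f) {C : ℝ}
    (hC : ∀ x, ‖f x‖ ≤ C) (hf' : HasCompactSupport (fderiv ℝ f)) : f.HasTemperateGrowth :=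
  .of_fderiv (hf'.hasTemperateGrowth (hf.fderiv_right (by simp))) (hf.differentiable (by simp))
    (k := 0) (C := C) (by simpa using hC)

end Function.HasTemperateGrowth

def oddCutoff (m x : ℝ) : ℝ :=
  Real.smoothTransition (x / m) - Real.smoothTransition (-x / m)

lemma oddCutoff_neg (m x : ℝ) : oddCutoff m (-x) = -oddCutoff m x := by
  simp only [oddCutoff, neg_neg]
  ring

lemma oddCutoff_of_le {m x : ℝ} (hm : 0 < m) (hx : m ≤ x) : oddCutoff m x = 1 := by
  rw [oddCutoff, Real.smoothTransition.one_of_one_le ((one_le_div hm).2 hx),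
    Real.smoothTransition.zero_of_nonpos (div_nonpos_of_nonpos_of_nonneg (by linarith) hm.le),
    sub_zero]

lemma oddCutoff_of_le_neg {m x : ℝ} (hm : 0 < m) (hx : x ≤ -m) : oddCutoff m x = -1 := by
  rw [← neg_neg x, oddCutoff_neg, oddCutoff_of_le hm (by linarith)]

lemma contDiff_oddCutoff (m : ℝ) : ContDiff ℝ ∞ (oddCutoff m) :=
  (Real.smoothTransition.contDiff.comp (contDiff_id.div_const m)).sub
    (Real.smoothTransition.contDiff.comp (contDiff_id.neg.div_const m))

lemma abs_oddCutoff_le_one (m x : ℝ) : |oddCutoff m x| ≤ 1 := by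
  have := Real.smoothTransition.nonneg (x / m)
  have := Real.smoothTransition.le_one (x / m)
  have := Real.smoothTransition.nonneg (-x / m)
  have := Real.smoothTransition.le_one (-x / m)
  rw [oddCutoff, abs_le]
  constructor <;> linarith

lemma fderiv_oddCutoff_eq_zero {m x : ℝ} (hm : 0 < m) (hx : x ∉ Set.Icc (-m) m) :
    fderiv ℝ (oddCutoff m) x = 0 := by
  rw [Set.mem_Icc, not_and_or, not_le, not_le] at hx
  rcases hx with hx | hx
  · have : oddCutoff m =ᶠ[nhds x] fun _ ↦ -1 := by
      filter_upwards [Iio_mem_nhds hx] with y hy using oddCutoff_of_le_neg hm (le_of_lt hy)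
    rw [this.fderiv_eq, fderiv_const_apply]
  · have : oddCutoff m =ᶠ[nhds x] fun _ ↦ 1 := by
      filter_upwards [Ioi_mem_nhds hx] with y hy using oddCutoff_of_le hm (le_of_lt hy)
    rw [this.fderiv_eq, fderiv_const_apply]

lemma hasTemperateGrowth_oddCutoff {m : ℝ} (hm : 0 < m) : (oddCutoff m).HasTemperateGrowth :=
  .of_bounded_of_hasCompactSupport_fderiv (contDiff_oddCutoff m) (abs_oddCutoff_le_one m)
    (.intro isCompact_Icc fun _ hx ↦ fderiv_oddCutoff_eq_zero hm hx)

section Fourier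

variable {V : Type*} [NormedAddCommGroup V] [InnerProductSpace ℝ V] [FiniteDimensional ℝ V]
  [MeasurableSpace V] [BorelSpace V]

lemma Real.conj_fourier (f : V → ℂ) (w : V) : conj (𝓕 f w) = 𝓕⁻ (fun v ↦ conj (f v)) w := by
  rw [Real.fourier_eq, Real.fourierInv_eq, ← integral_conj]
  congr 1 with v
  simp [Circle.smul_def, ← Circle.coe_inv_eq_conj, AddChar.map_neg_eq_inv]

lemma Real.conj_fourierInv (f : V → ℂ) (w : V) : conj (𝓕⁻ f w) = 𝓕 (fun v ↦ conj (f v)) w := by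
  rw [Real.fourierInv_eq_fourier_neg, Real.conj_fourier, Real.fourierInv_eq_fourier_neg, neg_neg]

lemma Real.conj_fourier_of_conj_eq {f : V → ℂ} (hf : ∀ v, conj (f v) = f v) (w : V) :
    conj (𝓕 f w) = 𝓕 f (-w) := by
  simp_rw [Real.conj_fourier, hf, Real.fourierInv_eq_fourier_neg]

lemma Real.conj_fourierInv_of_conj_eq_comp_neg {g : V → ℂ} (hg : ∀ v, conj (g v) = g (-v))
    (w : V) : conj (𝓕⁻ g w) = 𝓕⁻ g w := by
  simp_rw [Real.conj_fourierInv, hg, ← Real.fourierInv_eq_fourier_comp_neg]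

namespace SchwartzMap

lemma fourier_fourierMultiplierCLM_apply {F : Type*} [NormedAddCommGroup F] [NormedSpace ℂ F]
    [CompleteSpace F] {σ : V → ℂ} (hσ : σ.HasTemperateGrowth) (f : 𝓢(V, F)) (w : V) :
    𝓕 (⇑(fourierMultiplierCLM F σ f)) w = σ w • 𝓕 (⇑f) w := by
  rw [← fourier_coe, fourierMultiplierCLM_apply, fourier_fourierInv_eq,
    smulLeftCLM_apply_apply hσ, fourier_coe]

lemma conj_fourierMultiplierCLM_apply {σ : V → ℂ} (hσ : σ.HasTemperateGrowth)
    (hσ_conj : ∀ x, conj (σ x) = σ (-x)) {f : 𝓢(V, ℂ)} (hf : ∀ v, conj (f v) = f v) (w : V) :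
    conj (fourierMultiplierCLM ℂ σ f w) = fourierMultiplierCLM ℂ σ f w := by
  rw [fourierMultiplierCLM_apply, fourierInv_coe]
  refine Real.conj_fourierInv_of_conj_eq_comp_neg (fun v ↦ ?_) w
  rw [smulLeftCLM_apply_apply hσ, smulLeftCLM_apply_apply hσ, fourier_coe, smul_eq_mul,
    smul_eq_mul, map_mul, hσ_conj, Real.conj_fourier_of_conj_eq hf]

end SchwartzMap

end Fourier

theorem exists_real_schwartz_fourier_eq_I_mul (m : ℝ) (hm : 0 < m)
    (f : SchwartzMap ℝ ℂ) (hf : ∀ t, (f t).im = 0) :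
    ∃ h : SchwartzMap ℝ ℂ, (∀ t, (h t).im = 0) ∧
      ∀ lam : ℝ, m < lam →
        FourierTransform.fourier (⇑h : ℝ → ℂ) lam = Complex.I * FourierTransform.fourier (⇑f : ℝ → ℂ) lam := by
  set σ : ℝ → ℂ := fun x ↦ I * oddCutoff m x
  have hσ : σ.HasTemperateGrowth := by
    have := hasTemperateGrowth_oddCutoff hm
    fun_prop
  have hσ_conj : ∀ x, conj (σ x) = σ (-x) := fun x ↦ by
    simp [σ, oddCutoff_neg]
  refine ⟨fourierMultiplierCLM ℂ σ f, fun t ↦ ?_, fun lam hlam ↦ ?_⟩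
  · exact conj_eq_iff_im.1 <| conj_fourierMultiplierCLM_apply hσ hσ_conj
      (fun v ↦ conj_eq_iff_im.2 (hf v)) t
  · rw [fourier_fourierMultiplierCLM_apply hσ]
    simp [σ, oddCutoff_of_le hm hlam.le]
end
end
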